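/- arXiv:1909.11194 — 5 statements merged into one kernel-verified Lean document; each statement's English description precedes it below -/
import Mathlib

section
/- Let h(x) = x² / (ln(2 + 1/x))² for x > 0, which is strictly increasing with inverse h⁻¹. Then for any q̄ > 2 and a > 0, lim_{κ→∞} h⁻¹(a/κ) · κ^{1/q̄} = 0. -/
open Filter Real

lemma Hsurj_aux (y : ℝ) (hy : 0 < y) :
    ∃ x : ℝ, 0 < x ∧ x ^ 2 / (Real.log (2 + 1 / x)) ^ 2 = y := by
  set H : ℝ → ℝ := fun x => x ^ 2 / (Real.log (2 + 1 / x)) ^ 2 with hH_def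
  have hlogpos : ∀ x : ℝ, 0 < x → 0 < Real.log (2 + 1/x) := by
    intro x hx
    apply Real.log_pos
    have : 0 < 1/x := by positivity
    linarith
  have hcont : ContinuousOn H (Set.Ioi 0) := by
    apply ContinuousOn.div
    · exact (continuousOn_id.pow 2)
    · apply ContinuousOn.pow
      apply Real.continuousOn_log.comp
      · exact continuousOn_const.add (continuousOn_const.div continuousOn_id (fun x hx => ne_of_gt hx))
      · intro x hx
        have hx' : (0:ℝ) < x := hx
        have : (0:ℝ) < 2 + 1/x := by positivity
        simpa [one_div] using this.ne'
    · intro x hx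
      have := hlogpos x hx
      positivity
  set x₁ : ℝ := Real.sqrt y * Real.log 2 / 2 with hx₁def
  set x₂ : ℝ := Real.sqrt y * Real.log 3 + 1 with hx₂def
  have hsq : 0 < Real.sqrt y := Real.sqrt_pos.2 hy
  have hlog2 : 0 < Real.log 2 := Real.log_pos (by norm_num)
  have hlog3 : 0 < Real.log 3 := Real.log_pos (by norm_num)
  have hlog23 : Real.log 2 ≤ Real.log 3 := Real.log_le_log (by norm_num) (by norm_num)
  have hx₁pos : 0 < x₁ := by rw [hx₁def]; positivity
  have hx₂one : 1 ≤ x₂ := by rw [hx₂def]; nlinarith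
  have hx₁₂ : x₁ ≤ x₂ := by rw [hx₁def, hx₂def]; nlinarith
  have hsqsq : Real.sqrt y ^ 2 = y := Real.sq_sqrt hy.le
  have hH1 : H x₁ < y := by
    have hl : Real.log 2 ≤ Real.log (2 + 1/x₁) := by
      apply Real.log_le_log (by norm_num)
      have : 0 < 1/x₁ := by positivity
      linarith
    have hlp := hlogpos x₁ hx₁pos
    have hden : Real.log 2 ^ 2 ≤ Real.log (2 + 1/x₁) ^ 2 := pow_le_pow_left₀ hlog2.le hl 2
    have h1 : H x₁ ≤ x₁ ^ 2 / Real.log 2 ^ 2 := by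
      apply div_le_div_of_nonneg_left (by positivity) (by positivity) hden
    have h2 : x₁ ^ 2 / Real.log 2 ^ 2 = y / 4 := by
      rw [hx₁def]; field_simp; nlinarith
    linarith
  have hH2 : y ≤ H x₂ := by
    have hx₂pos : 0 < x₂ := by linarith
    have hl : Real.log (2 + 1/x₂) ≤ Real.log 3 := by
      apply Real.log_le_log (by positivity)
      have : 1/x₂ ≤ 1 := by rw [div_le_one hx₂pos]; linarith
      linarith
    have hlp := hlogpos x₂ hx₂pos
    have hden : Real.log (2 + 1/x₂) ^ 2 ≤ Real.log 3 ^ 2 := pow_le_pow_left₀ hlp.le hl 2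
    have h1 : x₂ ^ 2 / Real.log 3 ^ 2 ≤ H x₂ := by
      apply div_le_div_of_nonneg_left (by positivity) (by positivity) hden
    have h2 : y ≤ x₂ ^ 2 / Real.log 3 ^ 2 := by
      rw [le_div_iff₀ (by positivity), hx₂def]; nlinarith
    linarith
  have hsub : Set.Icc x₁ x₂ ⊆ Set.Ioi 0 := fun z hz => lt_of_lt_of_le hx₁pos hz.1
  obtain ⟨x, hxmem, hHx⟩ := intermediate_value_Icc hx₁₂ (hcont.mono hsub) ⟨hH1.le, hH2⟩
  exact ⟨x, hsub hxmem, hHx⟩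

lemma key_aux (r a : ℝ) (hr0 : 0 < r) (hr2 : r < 1/2) (ha : 0 < a) :
    ∀ᶠ κ : ℝ in atTop,
      a / κ ≤ (κ ^ (-r)) ^ 2 / (Real.log (2 + 1 / κ ^ (-r))) ^ 2 := by
  have hε : 0 < 1 - 2*r := by linarith
  have hlo : (fun κ : ℝ => Real.log κ ^ (2:ℝ)) =o[atTop] fun κ : ℝ => κ ^ (1 - 2*r) :=
    isLittleO_log_rpow_rpow_atTop 2 hε
  have hc : (0:ℝ) < (a * (1+r)^2)⁻¹ := by positivity
  filter_upwards [hlo.def hc, eventually_ge_atTop (3:ℝ)] with κ hκlo hκ3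
  have hκpos : (0:ℝ) < κ := by linarith
  have hκrinv : 1 / κ ^ (-r) = κ ^ r := by
    rw [one_div, ← Real.rpow_neg hκpos.le, neg_neg]
  have hκr1 : (1:ℝ) ≤ κ ^ r := Real.one_le_rpow (by linarith) hr0.le
  have hL : Real.log (2 + κ ^ r) ≤ Real.log 3 + r * Real.log κ := by
    have h3 : 2 + κ ^ r ≤ 3 * κ ^ r := by linarith
    calc Real.log (2 + κ ^ r) ≤ Real.log (3 * κ ^ r) :=
          Real.log_le_log (by positivity) h3
      _ = Real.log 3 + r * Real.log κ := by
          rw [Real.log_mul (by norm_num) (by positivity), Real.log_rpow hκpos]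
  have hLpos : 0 < Real.log (2 + κ ^ r) := by apply Real.log_pos; linarith
  have hlogκ : Real.log 3 ≤ Real.log κ := Real.log_le_log (by norm_num) hκ3
  have hlog3pos : 0 < Real.log 3 := Real.log_pos (by norm_num)
  have hlogκpos : 0 < Real.log κ := by linarith
  have hκ1_2r : (0:ℝ) < κ ^ (1 - 2*r) := Real.rpow_pos_of_pos hκpos _
  have hκlo' : Real.log κ ^ (2:ℕ) ≤ (a * (1+r)^2)⁻¹ * κ ^ (1 - 2*r) := by
    rw [Real.norm_eq_abs, Real.norm_eq_abs,
      abs_of_nonneg (by positivity : (0:ℝ) ≤ κ ^ (1-2*r))] at hκlo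
    rw [← Real.rpow_natCast (Real.log κ) 2]
    calc Real.log κ ^ (2:ℝ) ≤ |Real.log κ ^ (2:ℝ)| := le_abs_self _
      _ ≤ (a * (1+r)^2)⁻¹ * κ ^ (1 - 2*r) := hκlo
  have hkey : a * Real.log (2 + κ ^ r) ^ 2 ≤ κ ^ (1 - 2*r) := by
    have h1 : Real.log (2 + κ ^ r) ≤ (1 + r) * Real.log κ := by nlinarith
    have h2 : Real.log (2 + κ ^ r) ^ 2 ≤ ((1+r) * Real.log κ) ^ 2 := by nlinarith
    have h3 : a * ((1+r) * Real.log κ) ^ 2 ≤ κ ^ (1 - 2*r) := by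
      have h4 := mul_le_mul_of_nonneg_left hκlo'
        (le_of_lt (by positivity : (0:ℝ) < a * (1+r)^2))
      rw [← mul_assoc, mul_inv_cancel₀ (by positivity), one_mul] at h4
      calc a * ((1+r) * Real.log κ) ^ 2 = a * (1+r)^2 * Real.log κ ^ (2:ℕ) := by ring
        _ ≤ κ ^ (1 - 2*r) := h4
    nlinarith
  rw [hκrinv]
  have hsq2 : (κ ^ (-r)) ^ 2 = κ ^ (-(2*r)) := by
    rw [← Real.rpow_natCast (κ ^ (-r)) 2, ← Real.rpow_mul hκpos.le]
    norm_num; ring_nf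
  rw [hsq2, div_le_div_iff₀ hκpos (by positivity)]
  have hsplit : κ ^ (-(2*r)) * κ = κ ^ (1 - 2*r) := by
    nth_rewrite 2 [← Real.rpow_one κ]
    rw [← Real.rpow_add hκpos]; ring_nf
  rw [hsplit]
  nlinarith

theorem hinv_tendsto_zero (h hinv : ℝ → ℝ)
    (hdef : ∀ x > (0:ℝ), h x = x ^ 2 / (Real.log (2 + 1 / x)) ^ 2)
    (hmono : StrictMonoOn h (Set.Ioi 0))
    (hleft : ∀ x > (0:ℝ), hinv (h x) = x)
    (hright : ∀ y ∈ h '' Set.Ioi 0, h (hinv y) = y ∧ 0 < hinv y)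
    (q a : ℝ) (hq : 2 < q) (ha : 0 < a) :
    Filter.Tendsto (fun κ : ℝ => hinv (a / κ) * κ ^ (1 / q))
      Filter.atTop (nhds 0) := by
  have hq0 : 0 < q := by linarith
  set r : ℝ := (1/q + 1/2)/2 with hr_def
  have hqhalf : 1/q < 1/2 := by
    rw [div_lt_div_iff₀ hq0 (by norm_num)]; linarith
  have hrq : 1/q < r := by rw [hr_def]; linarith
  have hr2 : r < 1/2 := by rw [hr_def]; linarith
  have hr0 : 0 < r := by
    have : 0 < 1/q := by positivity
    rw [hr_def]; linarith
  have hbound : ∀ᶠ κ : ℝ in atTop, hinv (a/κ) ≤ κ ^ (-r) := by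
    filter_upwards [key_aux r a hr0 hr2 ha, eventually_ge_atTop (1:ℝ)] with κ hκkey hκ1
    have hκpos : (0:ℝ) < κ := by linarith
    have haκ : 0 < a/κ := by positivity
    obtain ⟨x, hx0, hxE⟩ := Hsurj_aux (a/κ) haκ
    have hxh : h x = a/κ := (hdef x hx0).trans hxE
    have hinveq : hinv (a/κ) = x := by rw [← hxh, hleft x hx0]
    rw [hinveq]
    by_contra hcon
    push_neg at hcon
    have hκr : (0:ℝ) < κ ^ (-r) := Real.rpow_pos_of_pos hκpos _
    have hlt : h (κ ^ (-r)) < h x := hmono hκr hx0 hcon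
    rw [hxh] at hlt
    rw [← hdef _ hκr] at hκkey
    linarith
  have hlow : ∀ᶠ κ : ℝ in atTop, 0 ≤ hinv (a/κ) * κ ^ (1/q) := by
    filter_upwards [eventually_gt_atTop (0:ℝ)] with κ hκ
    have haκ : 0 < a/κ := by positivity
    obtain ⟨x, hx0, hxE⟩ := Hsurj_aux (a/κ) haκ
    have hxh : h x = a/κ := (hdef x hx0).trans hxE
    have h1 : 0 < hinv (a/κ) := (hright _ ⟨x, hx0, hxh⟩).2
    have h2 : (0:ℝ) ≤ κ ^ (1/q) := (Real.rpow_pos_of_pos hκ _).le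
    positivity
  have hup : ∀ᶠ κ : ℝ in atTop, hinv (a/κ) * κ ^ (1/q) ≤ κ ^ (1/q - r) := by
    filter_upwards [hbound, eventually_gt_atTop (0:ℝ)] with κ hb hκ
    have heq : κ ^ (-r) * κ ^ (1/q) = κ ^ (1/q - r) := by
      rw [← Real.rpow_add hκ]; ring_nf
    calc hinv (a/κ) * κ ^ (1/q) ≤ κ ^ (-r) * κ ^ (1/q) :=
          mul_le_mul_of_nonneg_right hb (Real.rpow_nonneg hκ.le _)
      _ = κ ^ (1/q - r) := heq
  have hlim : Tendsto (fun κ : ℝ => κ ^ (1/q - r)) atTop (nhds 0) := by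
    have := tendsto_rpow_neg_atTop (show (0:ℝ) < r - 1/q by linarith)
    simpa [neg_sub] using this
  exact tendsto_of_tendsto_of_tendsto_of_le_of_le' tendsto_const_nhds hlim hlow hup
end

section
/- Let θ : [0,∞) → [0,∞) be locally absolutely continuous and suppose for almost all t ≥ 0: if θ(t) > 0 then θ'(t) ≤ α(t)θ(t) + M₁ θ(t)^q, where q < 1, M₁ > 0, α is locally integrable, and ∫_{t₁}^{t₂} α(t) dt ≤ M₂ for all 0 ≤ t₁ ≤ t₂ and some M₂ > 0. Then θ(t) ≤ e^{M₂} (1 + M₁(1−q)t)^{1/(1−q)} (1 + θ(0)) for all t ≥ 0. -/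
/-!
With `p = 1 - q`, the power `ψ = θ ^ p` satisfies the linear inequality `ψ' ≤ p (α ψ + M₁)`
wherever `θ > 0`; the integrating factor `exp (-p ∫ α)` and the bound on the integrals of `α` give
`ψ t₀ ≤ exp (p M₂) (ψ s + p M₁ (t₀ - s))` on every interval `[s, t₀]` on which `θ > 0`. There `ψ`
is absolutely continuous, so the a.e. inequality may be integrated. Choosing `s` as the last time
before `t₀` at which `θ ≤ 1` (or `s = 0`) bounds `ψ s` by `(1 + θ 0) ^ p`, and taking `p`-th roots
gives the claim.
-/

open MeasureTheory Set Filter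

theorem AbsolutelyContinuousOnInterval.congr {X : Type*} [PseudoMetricSpace X] {f g : ℝ → X} {a b : ℝ}
    (hf : AbsolutelyContinuousOnInterval f a b) (hfg : EqOn f g (uIcc a b)) :
    AbsolutelyContinuousOnInterval g a b := by
  unfold AbsolutelyContinuousOnInterval at hf ⊢
  refine hf.congr' ?_
  rw [eventuallyEq_inf_principal_iff]
  filter_upwards with ⟨n, I⟩ hnI
  exact Finset.sum_congr rfl fun i hi => by rw [hfg (hnI.1 i hi).1, hfg (hnI.1 i hi).2]

section
variable {F Y : Type*} [SeminormedAddCommGroup F] [PseudoMetricSpace Y] {f : ℝ → F} {a b : ℝ}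
  {g : F → Y} {s : Set F}

theorem LipschitzOnWith.comp_absolutelyContinuousOnInterval {K : NNReal}
    (hg : LipschitzOnWith K g s) (hf : AbsolutelyContinuousOnInterval f a b)
    (hfs : MapsTo f (uIcc a b) s) : AbsolutelyContinuousOnInterval (fun x => g (f x)) a b := by
  unfold AbsolutelyContinuousOnInterval at hf ⊢
  refine squeeze_zero' (Eventually.of_forall fun _ => Finset.sum_nonneg fun _ _ => dist_nonneg)
    ?_ (by simpa using hf.const_mul (K : ℝ))
  rw [eventually_inf_principal]
  filter_upwards with ⟨n, I⟩ hnI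
  rw [Finset.mul_sum]
  gcongr with i hi
  exact hg.dist_le_mul _ (hfs (hnI.1 i hi).1) _ (hfs (hnI.1 i hi).2)

theorem LocallyLipschitzOn.comp_absolutelyContinuousOnInterval
    (hg : LocallyLipschitzOn s g) (hf : AbsolutelyContinuousOnInterval f a b)
    (hfs : MapsTo f (uIcc a b) s) : AbsolutelyContinuousOnInterval (fun x => g (f x)) a b := by
  obtain ⟨K, hK⟩ := (hg.mono hfs.image_subset).exists_lipschitzOnWith_of_compact
    (isCompact_uIcc.image_of_continuousOn hf.continuousOn)
  exact hK.comp_absolutelyContinuousOnInterval hf (mapsTo_image f _)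

end

theorem absolutelyContinuousOnInterval_of_eq_add_integral {θ θ' : ℝ → ℝ} {c a b : ℝ}
    (hca : c ≤ a) (hab : a ≤ b) (hθ' : IntervalIntegrable θ' volume c b)
    (hθ : ∀ t, c ≤ t → θ t = θ c + ∫ s in c..t, θ' s) :
    AbsolutelyContinuousOnInterval θ a b := by
  have hI := hθ'.absolutelyContinuousOnInterval_intervalIntegral left_mem_uIcc
  have hconst : AbsolutelyContinuousOnInterval (fun _ => θ c) c b :=
    (LipschitzWith.const (θ c)).lipschitzOnWith.absolutelyContinuousOnInterval
  refine ((hconst.fun_add hI).mono (uIcc_subset_uIcc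
    (by simp [uIcc_of_le (hca.trans hab), hca, hab]) right_mem_uIcc)).congr ?_
  intro t ht
  rw [uIcc_of_le hab] at ht
  exact (hθ t (hca.trans ht.1)).symm

theorem ae_hasDerivAt_of_eq_add_integral {θ θ' : ℝ → ℝ} {c : ℝ}
    (hθ' : ∀ b, IntervalIntegrable θ' volume c b)
    (hθ : ∀ t, c ≤ t → θ t = θ c + ∫ s in c..t, θ' s) :
    ∀ᵐ t, c ≤ t → HasDerivAt θ (θ' t) t := by
  have hc : ∀ᵐ t, t ≠ c := by simp [ae_iff, measure_singleton]
  have hprim := ae_all_iff.2 fun n : ℕ => (hθ' (c + n)).ae_hasDerivAt_integral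
  filter_upwards [hprim, hc] with t ht htc hct
  obtain ⟨n, hn⟩ := exists_nat_ge (t - c)
  have htI : t ∈ uIcc c (c + n) := by rw [uIcc_of_le (by linarith)]; constructor <;> linarith
  refine ((ht n htI c left_mem_uIcc).const_add (θ c)).congr_of_eventuallyEq ?_
  filter_upwards [Ioi_mem_nhds (lt_of_le_of_ne hct htc.symm)] with u hu using hθ u hu.le

theorem rpow_neg_mul_le_of_le_add {x y α M q : ℝ} (hx : 0 < x) (hy : y ≤ α * x + M * x ^ q) :
    x ^ (-q) * y ≤ α * x ^ (1 - q) + M := by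
  calc x ^ (-q) * y ≤ x ^ (-q) * (α * x + M * x ^ q) := by gcongr
    _ = α * x ^ (1 - q) + M := by
      rw [mul_add, Real.rpow_neg hx.le, sub_eq_add_neg, Real.rpow_add hx, Real.rpow_one,
        Real.rpow_neg hx.le]
      field_simp

theorem AbsolutelyContinuousOnInterval.exp_mul_rpow_le {θ α : ℝ → ℝ} {a b q M : ℝ}
    (hθ : AbsolutelyContinuousOnInterval θ a b) (hab : a ≤ b) (hq : q < 1)
    (hθpos : ∀ t ∈ Icc a b, 0 < θ t) (hα : IntervalIntegrable α volume a b)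
    (hineq : ∀ᵐ t, t ∈ Icc a b → deriv θ t ≤ α t * θ t + M * θ t ^ q) :
    Real.exp (-(1 - q) * ∫ u in a..b, α u) * θ b ^ (1 - q) ≤
      θ a ^ (1 - q) + (1 - q) * M * ∫ t in a..b, Real.exp (-(1 - q) * ∫ u in a..t, α u) := by
  set p := 1 - q
  have hp : 0 < p := sub_pos.2 hq
  set A : ℝ → ℝ := fun t => ∫ u in a..t, α u
  set E : ℝ → ℝ := fun t => Real.exp (-p * A t) with hE_def
  have hA : AbsolutelyContinuousOnInterval A a b :=
    hα.absolutelyContinuousOnInterval_intervalIntegral left_mem_uIcc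
  have hE : AbsolutelyContinuousOnInterval E a b :=
    (Real.contDiff_exp.contDiffOn.locallyLipschitzOn
      convex_univ).comp_absolutelyContinuousOnInterval (hA.const_mul (-p)) (mapsTo_univ _ _)
  have hrpow : ContDiffOn ℝ 1 (fun x : ℝ => x ^ p) (Ioi 0) := fun x hx =>
    (Real.contDiffAt_rpow_const_of_ne (ne_of_gt hx)).contDiffWithinAt
  have hθp : AbsolutelyContinuousOnInterval (fun t => θ t ^ p) a b :=
    (hrpow.locallyLipschitzOn (convex_Ioi 0)).comp_absolutelyContinuousOnInterval hθ
      fun t ht => hθpos t (by rwa [uIcc_of_le hab] at ht)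
  have hψ := hE.fun_mul hθp
  have hderiv : ∀ᵐ t, t ∈ Icc a b → deriv (fun t => E t * θ t ^ p) t ≤ p * M * E t := by
    filter_upwards [hineq, hθ.ae_differentiableAt, hα.ae_hasDerivAt_integral]
      with t hineq_t hθ_t hA_t ht
    have htI : t ∈ uIcc a b := Icc_subset_uIcc ht
    have hE' : HasDerivAt E (E t * (-p * α t)) t :=
      ((hA_t htI a left_mem_uIcc).const_mul (-p)).exp
    have hθp' : HasDerivAt (fun t => θ t ^ p) (deriv θ t * p * θ t ^ (p - 1)) t :=
      (hθ_t htI).hasDerivAt.rpow_const (Or.inl (hθpos t ht).ne')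
    -- `(E θ ^ p)' = p E (θ ^ (-q) θ' - α θ ^ p)`
    have hkey := rpow_neg_mul_le_of_le_add (hθpos t ht) (hineq_t ht)
    rw [(hE'.fun_mul hθp').deriv, show p - 1 = -q by ring]
    have hEt : 0 < E t := Real.exp_pos _
    nlinarith [mul_le_mul_of_nonneg_left hkey (mul_pos hEt hp).le]
  have hftc : E b * θ b ^ p - E a * θ a ^ p ≤ p * M * ∫ u in a..b, E u := by
    rw [← hψ.integral_deriv_eq_sub, ← intervalIntegral.integral_const_mul]
    exact intervalIntegral.integral_mono_ae_restrict hab hψ.intervalIntegrable_deriv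
      (hE.continuousOn.intervalIntegrable.const_mul _)
      ((ae_restrict_iff' measurableSet_Icc).2 hderiv)
  have hEa : E a = 1 := by simp [hE_def, A]
  rw [hEa, one_mul] at hftc
  linarith

theorem AbsolutelyContinuousOnInterval.rpow_le_of_deriv_le {θ α : ℝ → ℝ} {a b q M₁ M₂ : ℝ}
    (hθ : AbsolutelyContinuousOnInterval θ a b) (hab : a ≤ b) (hq : q < 1) (hM₁ : 0 ≤ M₁)
    (hθpos : ∀ t ∈ Icc a b, 0 < θ t)
    (hα : IntervalIntegrable α volume a b) (hαM : ∀ t ∈ Icc a b, ∫ u in t..b, α u ≤ M₂)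
    (hineq : ∀ᵐ t, t ∈ Icc a b → deriv θ t ≤ α t * θ t + M₁ * θ t ^ q) :
    θ b ^ (1 - q) ≤ Real.exp ((1 - q) * M₂) * (θ a ^ (1 - q) + (1 - q) * M₁ * (b - a)) := by
  have hftc := hθ.exp_mul_rpow_le hab hq hθpos hα hineq
  set p := 1 - q
  have hp : 0 < p := sub_pos.2 hq
  set A : ℝ → ℝ := fun t => ∫ u in a..t, α u
  set E : ℝ → ℝ := fun t => Real.exp (-p * A t) with hE_def
  have hAb : A b ≤ M₂ := hαM a (left_mem_Icc.2 hab)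
  have hweight : ∀ u ∈ Icc a b, Real.exp (p * A b) * E u ≤ Real.exp (p * M₂) := by
    intro u hu
    have hAu : A b - A u = ∫ s in u..b, α s :=
      intervalIntegral.integral_interval_sub_left hα (hα.mono_set (uIcc_subset_uIcc_left
        (Icc_subset_uIcc hu)))
    rw [← Real.exp_add, Real.exp_le_exp]
    nlinarith [hαM u hu]
  have hint : Real.exp (p * A b) * ∫ u in a..b, E u ≤ Real.exp (p * M₂) * (b - a) := by
    rw [← intervalIntegral.integral_const_mul, ← abs_of_nonneg (sub_nonneg.2 hab)]
    refine (Real.le_norm_self _).trans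
      (intervalIntegral.norm_integral_le_of_norm_le_const fun u hu => ?_)
    rw [uIoc_of_le hab] at hu
    rw [Real.norm_of_nonneg (by positivity)]
    exact hweight u (Ioc_subset_Icc_self hu)
  calc θ b ^ p = Real.exp (p * A b) * (E b * θ b ^ p) := by
        rw [hE_def, ← mul_assoc, ← Real.exp_add]; simp
    _ ≤ Real.exp (p * A b) * (θ a ^ p + p * M₁ * ∫ u in a..b, E u) := by gcongr
    _ = Real.exp (p * A b) * θ a ^ p + p * M₁ * (Real.exp (p * A b) * ∫ u in a..b, E u) := by
        ring
    _ ≤ Real.exp (p * M₂) * θ a ^ p + p * M₁ * (Real.exp (p * M₂) * (b - a)) := by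
        have := (Real.rpow_pos_of_pos (hθpos a (left_mem_Icc.2 hab)) p).le
        gcongr
    _ = Real.exp (p * M₂) * (θ a ^ p + p * M₁ * (b - a)) := by ring

theorem ContinuousOn.exists_forall_Icc_le {f : ℝ → ℝ} {a b c : ℝ} (hab : a ≤ b)
    (hf : ContinuousOn f (Icc a b)) (hb : c ≤ f b) :
    ∃ s ∈ Icc a b, (∀ t ∈ Icc s b, c ≤ f t) ∧ f s ≤ max c (f a) := by
  by_cases hall : ∀ t ∈ Icc a b, c ≤ f t
  · exact ⟨a, left_mem_Icc.2 hab, fun t ht => hall t ⟨ht.1, ht.2⟩, le_max_right _ _⟩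
  push Not at hall
  obtain ⟨t₀, ht₀, hft₀⟩ := hall
  set S := Icc a b ∩ f ⁻¹' Iic c
  have hS_bdd : BddAbove S := bddAbove_Icc.mono inter_subset_left
  have hsS : sSup S ∈ S := (hf.preimage_isClosed_of_isClosed isClosed_Icc isClosed_Iic).csSup_mem
    ⟨t₀, ht₀, hft₀.le⟩ hS_bdd
  set s := sSup S
  refine ⟨s, hsS.1, ?_, le_max_of_le_left hsS.2⟩
  have hright : Ioc s b ⊆ Icc a b ∩ f ⁻¹' Ici c := fun t ht =>
    ⟨⟨hsS.1.1.trans ht.1.le, ht.2⟩,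
      show c ≤ f t from not_lt.1 fun hlt =>
        (le_csSup hS_bdd ⟨⟨hsS.1.1.trans ht.1.le, ht.2⟩, hlt.le⟩).not_gt ht.1⟩
  rcases hsS.1.2.eq_or_lt with hsb | hsb
  · intro t ht
    rwa [show t = b by linarith [ht.1, ht.2]]
  · rw [← closure_Ioc hsb.ne]
    have hT : IsClosed (Icc a b ∩ f ⁻¹' Ici c) :=
      hf.preimage_isClosed_of_isClosed isClosed_Icc isClosed_Ici
    exact fun t ht => (hT.closure_subset_iff.2 hright ht).2

theorem le_exp_mul_rpow_mul_of_rpow_le {x y u M p : ℝ} (hp : 0 < p) (hx : 0 ≤ x) (hy : 0 ≤ y)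
    (hu : 0 ≤ u) (h : x ^ p ≤ Real.exp (p * M) * (u * y ^ p)) :
    x ≤ Real.exp M * u ^ (1 / p) * y := by
  rwa [← Real.rpow_le_rpow_iff hx (by positivity) hp, Real.mul_rpow (by positivity) hy,
    Real.mul_rpow (by positivity) (by positivity), ← Real.exp_mul, one_div,
    Real.rpow_inv_rpow hu hp.ne', mul_comm M, mul_assoc]

theorem comparison_polynomial_growth_general (θ θ' α : ℝ → ℝ) (M₁ M₂ q : ℝ)
    (hM₁ : 0 < M₁) (hq : q < 1)
    (hθnonneg : ∀ t, 0 ≤ t → 0 ≤ θ t)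
    (hθ'int : ∀ t, IntervalIntegrable θ' volume 0 t)
    (hθFTC : ∀ t, 0 ≤ t → θ t = θ 0 + ∫ s in (0:ℝ)..t, θ' s)
    (hαint : ∀ t, IntervalIntegrable α volume 0 t)
    (hαbound : ∀ t₁ t₂, 0 ≤ t₁ → t₁ ≤ t₂ → (∫ s in t₁..t₂, α s) ≤ M₂)
    (hineq : ∀ᵐ t ∂volume, 0 ≤ t → 0 < θ t → θ' t ≤ α t * θ t + M₁ * θ t ^ q) :
    ∀ t, 0 ≤ t →
      θ t ≤ Real.exp M₂ * (1 + M₁ * (1 - q) * t) ^ (1 / (1 - q)) * (1 + θ 0) := by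
  intro t₀ ht₀
  set p := 1 - q
  have hp : 0 < p := sub_pos.2 hq
  have hθ0 : 0 ≤ θ 0 := hθnonneg 0 le_rfl
  have hθ0p : 1 ≤ (1 + θ 0) ^ p := Real.one_le_rpow (by linarith) hp.le
  have hM₂ : 0 ≤ M₂ := by simpa using hαbound 0 0 le_rfl le_rfl
  have hθAC : ∀ a b, 0 ≤ a → a ≤ b → AbsolutelyContinuousOnInterval θ a b := fun a b ha hab =>
    absolutelyContinuousOnInterval_of_eq_add_integral ha hab (hθ'int b) hθFTC
  refine le_exp_mul_rpow_mul_of_rpow_le hp (hθnonneg t₀ ht₀) (by linarith) (by positivity) ?_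
  rcases le_or_gt (θ t₀) 1 with hle | hgt
  · calc θ t₀ ^ p ≤ 1 := Real.rpow_le_one (hθnonneg t₀ ht₀) hle hp.le
      _ ≤ _ := one_le_mul_of_one_le_of_one_le (Real.one_le_exp (by positivity))
          (one_le_mul_of_one_le_of_one_le (le_add_of_nonneg_right (by positivity)) hθ0p)
  obtain ⟨s, hs, hθ1, hθs⟩ := ((hθAC 0 t₀ le_rfl ht₀).continuousOn.mono
    Icc_subset_uIcc).exists_forall_Icc_le ht₀ hgt.le
  have hθpos : ∀ t ∈ Icc s t₀, 0 < θ t := fun t ht => one_pos.trans_le (hθ1 t ht)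
  have hderiv : ∀ᵐ t, t ∈ Icc s t₀ → deriv θ t ≤ α t * θ t + M₁ * θ t ^ q := by
    filter_upwards [hineq, ae_hasDerivAt_of_eq_add_integral hθ'int hθFTC] with t hineq_t hθ'_t ht
    have ht0 : 0 ≤ t := hs.1.trans ht.1
    rw [(hθ'_t ht0).deriv]
    exact hineq_t ht0 (hθpos t ht)
  have hbound := (hθAC s t₀ hs.1 hs.2).rpow_le_of_deriv_le hs.2 hq hM₁.le hθpos
    ((hαint t₀).mono_set (uIcc_subset_uIcc (Icc_subset_uIcc hs) right_mem_uIcc))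
    (fun t ht => hαbound t t₀ (hs.1.trans ht.1) ht.2) hderiv
  have hθs' : θ s ^ p ≤ (1 + θ 0) ^ p :=
    Real.rpow_le_rpow (hθnonneg s hs.1) (hθs.trans (max_le (by linarith) (by linarith))) hp.le
  refine hbound.trans ?_
  gcongr
  nlinarith [mul_nonneg (mul_nonneg hp.le hM₁.le) hs.1, mul_nonneg (mul_nonneg hM₁.le hp.le) ht₀]

theorem comparison_polynomial_growth (θ θ' α : ℝ → ℝ) (M₁ M₂ q : ℝ)
    (hM₁ : 0 < M₁) (hM₂ : 0 < M₂) (hq : q < 1)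
    (hθnonneg : ∀ t, 0 ≤ t → 0 ≤ θ t)
    (hθ'int : ∀ t, IntervalIntegrable θ' volume 0 t)
    (hθFTC : ∀ t, 0 ≤ t → θ t = θ 0 + ∫ s in (0:ℝ)..t, θ' s)
    (hαint : ∀ t, IntervalIntegrable α volume 0 t)
    (hαbound : ∀ t₁ t₂, 0 ≤ t₁ → t₁ ≤ t₂ → (∫ s in t₁..t₂, α s) ≤ M₂)
    (hineq : ∀ᵐ t ∂volume, 0 ≤ t → 0 < θ t → θ' t ≤ α t * θ t + M₁ * θ t ^ q) :
    ∀ t, 0 ≤ t →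
      θ t ≤ Real.exp M₂ * (1 + M₁ * (1 - q) * t) ^ (1 / (1 - q)) * (1 + θ 0) :=
  comparison_polynomial_growth_general θ θ' α M₁ M₂ q hM₁ hq hθnonneg hθ'int hθFTC hαint hαbound
    hineq
end

section
/- Consider a function α : [0,∞) → ℝ that is locally integrable, let A(t) = ∫_0^t α(s) ds and Ā(t) = min_{0≤s≤t} A(s). Define α̂(t) = α(t) + ᾱ(t) where ᾱ is the nonnegative locally integrable function with Ā(t) = −∫_0^t ᾱ(s) ds. Then for all t ≥ 0: (i) α̂(t) ≥ α(t) a.e.; (ii) ∫_0^t α̂(s) ds ≥ 0; and (iii) if ∫_{t₁}^{t₂} α(s) ds ≤ M₂ for all 0 ≤ t₁ ≤ t₂, then ∫_0^t α̂(s) ds ≤ M₂. -/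
open MeasureTheory

theorem alpha_hat_properties (α αbar : ℝ → ℝ) (M₂ : ℝ)
    (hα : ∀ t, IntervalIntegrable α volume 0 t)
    (hαbar : ∀ t, IntervalIntegrable αbar volume 0 t)
    (hαbarnn : ∀ t, 0 ≤ αbar t)
    (hAbar : ∀ t, 0 ≤ t →
      (-∫ s in (0:ℝ)..t, αbar s) =
        sInf ((fun u => ∫ s in (0:ℝ)..u, α s) '' Set.Icc 0 t)) :
    (∀ t, α t ≤ α t + αbar t) ∧
    (∀ t, 0 ≤ t → 0 ≤ ∫ s in (0:ℝ)..t, (α s + αbar s)) ∧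
    ((∀ t₁ t₂, 0 ≤ t₁ → t₁ ≤ t₂ → (∫ s in t₁..t₂, α s) ≤ M₂) →
      ∀ t, 0 ≤ t → (∫ s in (0:ℝ)..t, (α s + αbar s)) ≤ M₂) := by
  have hint : ∀ a b, IntervalIntegrable α volume a b := fun a b =>
    ((hα a).symm.trans (hα b))
  have hcont : Continuous fun u => ∫ s in (0:ℝ)..u, α s :=
    intervalIntegral.continuous_primitive hint 0
  have hsplit : ∀ t, (∫ s in (0:ℝ)..t, (α s + αbar s)) =
      (∫ s in (0:ℝ)..t, α s) + (∫ s in (0:ℝ)..t, αbar s) := fun t =>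
    intervalIntegral.integral_add (hα t) (hαbar t)
  refine ⟨fun t => le_add_of_nonneg_right (hαbarnn t), ?_, ?_⟩
  · intro t ht
    have hmem : (∫ s in (0:ℝ)..t, α s) ∈
        ((fun u => ∫ s in (0:ℝ)..u, α s) '' Set.Icc 0 t) :=
      ⟨t, Set.right_mem_Icc.2 ht, rfl⟩
    have hbdd : BddBelow ((fun u => ∫ s in (0:ℝ)..u, α s) '' Set.Icc 0 t) :=
      ((isCompact_Icc.image hcont)).bddBelow
    have h1 : sInf ((fun u => ∫ s in (0:ℝ)..u, α s) '' Set.Icc 0 t)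
        ≤ ∫ s in (0:ℝ)..t, α s := csInf_le hbdd hmem
    rw [hsplit t]
    have := hAbar t ht
    linarith
  · intro hM t ht
    have hne : ((fun u => ∫ s in (0:ℝ)..u, α s) '' Set.Icc 0 t).Nonempty :=
      ⟨_, ⟨t, Set.right_mem_Icc.2 ht, rfl⟩⟩
    have hm : sInf ((fun u => ∫ s in (0:ℝ)..u, α s) '' Set.Icc 0 t) ∈
        ((fun u => ∫ s in (0:ℝ)..u, α s) '' Set.Icc 0 t) :=
      (isCompact_Icc.image hcont).sInf_mem hne
    set m := sInf ((fun u => ∫ s in (0:ℝ)..u, α s) '' Set.Icc 0 t) with hsInf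
    obtain ⟨u, hu, hum⟩ := hm
    have key : (∫ s in (0:ℝ)..t, α s) - m = ∫ s in u..t, α s := by
      rw [← hum]
      simp only []
      exact (intervalIntegral.integral_interval_sub_left (hα t) (hα u))
    have hMle : (∫ s in u..t, α s) ≤ M₂ := hM u t hu.1 hu.2
    rw [hsplit t]
    have hAb := hAbar t ht
    linarith
end

section
/- Suppose the solution ξ of ξ'(t) = F(t, ξ(t)) admits a C¹ function V : ℝ^d → ℝ with a₁‖ξ‖^r ≤ V(ξ) ≤ a₂‖ξ‖^r for all ξ (where a₁, a₂ > 0 and r > 1), and DV(ξ)F(t,ξ) ≤ α(t)V(ξ) for all t ≥ 0 and ξ ≠ 0, where α is locally integrable. Then ‖ξ(t)‖ ≤ (a₂/a₁)^{1/r} ‖ξ(0)‖ e^{(1/r)∫_0^t α(s)ds} for all t ≥ 0. -/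
/-!
Along the solution, `W = V ∘ ξ` is nonnegative and satisfies `W' ≤ α W` wherever `W > 0`. There
`(log W)' ≤ α` with `α` merely integrable, so the integral form of the mean value inequality gives
`W b ≤ W a * exp (∫ t in a..b, α t)`; letting `a` decrease to the last zero of `W` before `b`
extends this to `W ≥ 0`. The sandwich bounds on `V` turn `W t ≤ W 0 * exp (∫ α)` into the claim.
-/

open MeasureTheory Set Filter Topology Real

section Gronwall

variable {W W' α : ℝ → ℝ} {a b : ℝ}

theorem le_mul_exp_integral_of_pos (hab : a ≤ b) (hcont : ContinuousOn W (Icc a b))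
    (hderiv : ∀ t ∈ Ioo a b, HasDerivAt W (W' t) t) (hpos : ∀ t ∈ Icc a b, 0 < W t)
    (hα : IntegrableOn α (Icc a b)) (hle : ∀ t ∈ Ioo a b, W' t ≤ α t * W t) :
    W b ≤ W a * exp (∫ t in a..b, α t) := by
  have hWa := hpos a (left_mem_Icc.mpr hab)
  have hWb := hpos b (right_mem_Icc.mpr hab)
  have hlog : log (W b) - log (W a) ≤ ∫ t in a..b, α t :=
    intervalIntegral.sub_le_integral_of_hasDeriv_right_of_le hab
      (hcont.log fun t ht => (hpos t ht).ne')
      (fun t ht => ((hderiv t ht).log (hpos t (Ioo_subset_Icc_self ht)).ne').hasDerivWithinAt)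
      hα (fun t ht => (div_le_iff₀ (hpos t (Ioo_subset_Icc_self ht))).mpr (hle t ht))
  calc W b = exp (log (W b)) := (exp_log hWb).symm
    _ ≤ exp (log (W a) + ∫ t in a..b, α t) := exp_le_exp.mpr (by linarith)
    _ = W a * exp (∫ t in a..b, α t) := by rw [exp_add, exp_log hWa]

theorem le_mul_exp_integral_of_pos_Ioc (hab : a ≤ b) (hcont : ContinuousOn W (Icc a b))
    (hderiv : ∀ t ∈ Ioo a b, HasDerivAt W (W' t) t) (hpos : ∀ t ∈ Ioc a b, 0 < W t)
    (hα : IntegrableOn α (Icc a b)) (hle : ∀ t ∈ Ioo a b, W' t ≤ α t * W t) :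
    W b ≤ W a * exp (∫ t in a..b, α t) := by
  obtain rfl | hab := hab.eq_or_lt
  · simp
  have hlim : Tendsto (fun s => W s * exp (∫ t in s..b, α t)) (𝓝[>] a)
      (𝓝 (W a * exp (∫ t in a..b, α t))) := by
    have hprim := intervalIntegral.continuousOn_primitive_interval_left
      (uIcc_of_le hab.le ▸ hα)
    rw [uIcc_of_le hab.le] at hprim
    refine ((hcont.mul (continuous_exp.comp_continuousOn hprim)) a
      (left_mem_Icc.mpr hab.le)).tendsto.mono_left ?_
    exact nhdsWithin_le_of_mem (Icc_mem_nhdsGT hab)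
  refine ge_of_tendsto hlim ?_
  filter_upwards [Ioo_mem_nhdsGT hab] with s hs
  exact le_mul_exp_integral_of_pos hs.2.le (hcont.mono (Icc_subset_Icc_left hs.1.le))
    (fun t ht => hderiv t ⟨hs.1.trans ht.1, ht.2⟩)
    (fun t ht => hpos t ⟨hs.1.trans_le ht.1, ht.2⟩)
    (hα.mono_set (Icc_subset_Icc_left hs.1.le))
    (fun t ht => hle t ⟨hs.1.trans ht.1, ht.2⟩)

theorem le_mul_exp_integral_of_nonneg (hab : a ≤ b) (hcont : ContinuousOn W (Icc a b))
    (hderiv : ∀ t ∈ Ioo a b, HasDerivAt W (W' t) t) (hnonneg : ∀ t ∈ Icc a b, 0 ≤ W t)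
    (hα : IntegrableOn α (Icc a b)) (hle : ∀ t ∈ Ioo a b, 0 < W t → W' t ≤ α t * W t) :
    W b ≤ W a * exp (∫ t in a..b, α t) := by
  set Z : Set ℝ := {a} ∪ (Icc a b ∩ W ⁻¹' {0})
  have hZbdd : BddAbove Z := ⟨b, by rintro t (rfl | ⟨ht, -⟩) <;> [exact hab; exact ht.2]⟩
  have hc : sSup Z ∈ Z :=
    (isClosed_singleton.union (hcont.preimage_isClosed_of_isClosed isClosed_Icc
      isClosed_singleton)).csSup_mem ⟨a, .inl rfl⟩ hZbdd
  -- `c` is the last zero of `W` in `[a, b]`, or `a` if there is none.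
  set c := sSup Z
  have hac : a ≤ c := le_csSup hZbdd (.inl rfl)
  have hcb : c ≤ b := by rcases hc with hc | ⟨hc, -⟩ <;> [exact hc ▸ hab; exact hc.2]
  have hpos : ∀ t ∈ Ioc c b, 0 < W t := fun t ht => by
    have htZ : t ∉ Z := fun htZ => (le_csSup hZbdd htZ).not_gt ht.1
    refine (hnonneg t ⟨hac.trans ht.1.le, ht.2⟩).lt_of_ne' fun hWt => htZ (.inr ?_)
    exact ⟨⟨hac.trans ht.1.le, ht.2⟩, hWt⟩
  have hbound := le_mul_exp_integral_of_pos_Ioc hcb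
    (hcont.mono (Icc_subset_Icc_left hac)) (fun t ht => hderiv t ⟨hac.trans_lt ht.1, ht.2⟩) hpos
    (hα.mono_set (Icc_subset_Icc_left hac))
    (fun t ht => hle t ⟨hac.trans_lt ht.1, ht.2⟩ (hpos t (Ioo_subset_Ioc_self ht)))
  rcases hc with hca | ⟨-, hWc⟩
  · rwa [← hca]
  · rw [mem_preimage, mem_singleton_iff] at hWc
    rw [hWc, zero_mul] at hbound
    exact hbound.trans (mul_nonneg (hnonneg a (left_mem_Icc.mpr hab)) (exp_pos _).le)

end Gronwall

theorem le_rpow_mul_mul_exp_of_mul_rpow_le {x y a₁ a₂ r I : ℝ} (hx : 0 ≤ x) (hy : 0 ≤ y)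
    (ha₁ : 0 < a₁) (ha₂ : 0 ≤ a₂) (hr : 0 < r) (h : a₁ * x ^ r ≤ a₂ * y ^ r * exp I) :
    x ≤ (a₂ / a₁) ^ (1 / r) * y * exp (1 / r * I) := by
  have hq : 0 ≤ a₂ / a₁ := div_nonneg ha₂ ha₁.le
  have hyr : 0 ≤ y ^ r := rpow_nonneg hy r
  have hrhs : (a₂ / a₁) ^ (1 / r) * y * exp (1 / r * I) = (a₂ / a₁ * y ^ r * exp I) ^ r⁻¹ := by
    rw [mul_rpow (mul_nonneg hq hyr) (exp_pos I).le, mul_rpow hq hyr,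
      rpow_rpow_inv hy hr.ne', ← exp_mul, one_div, mul_comm I]
  rw [hrhs, le_rpow_inv_iff_of_pos hx (by positivity) hr, mul_assoc, div_mul_eq_mul_div,
    le_div_iff₀ ha₁, mul_comm, ← mul_assoc]
  exact h

theorem lyapunov_growth_M1_zero {d : ℕ}
    (F : ℝ → EuclideanSpace ℝ (Fin d) → EuclideanSpace ℝ (Fin d))
    (ξ : ℝ → EuclideanSpace ℝ (Fin d))
    (hξ : ∀ t, 0 ≤ t → HasDerivAt ξ (F t (ξ t)) t)
    (V : EuclideanSpace ℝ (Fin d) → ℝ) (hV : ContDiff ℝ 1 V)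
    (a₁ a₂ r : ℝ) (ha₁ : 0 < a₁) (ha₂ : 0 < a₂) (hr : 1 < r)
    (hsand : ∀ x, a₁ * ‖x‖ ^ r ≤ V x ∧ V x ≤ a₂ * ‖x‖ ^ r)
    (α : ℝ → ℝ) (hα : ∀ t, IntervalIntegrable α volume 0 t)
    (hLyap : ∀ t, 0 ≤ t → ∀ x, x ≠ 0 → fderiv ℝ V x (F t x) ≤ α t * V x) :
    ∀ t, 0 ≤ t →
      ‖ξ t‖ ≤ (a₂ / a₁) ^ (1 / r) * ‖ξ 0‖ *
        Real.exp ((1 / r) * ∫ s in (0:ℝ)..t, α s) := by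
  intro t ht
  have hr₀ : 0 < r := one_pos.trans hr
  have hV₀ : V 0 = 0 := by
    have := hsand 0
    rw [norm_zero, zero_rpow hr₀.ne', mul_zero, mul_zero] at this
    exact le_antisymm this.2 this.1
  have hVξ : ∀ s, 0 ≤ s → HasDerivAt (fun s => V (ξ s)) (fderiv ℝ V (ξ s) (F s (ξ s))) s :=
    fun s hs => ((hV.differentiable one_ne_zero _).hasFDerivAt).comp_hasDerivAt s (hξ s hs)
  have hgrowth : V (ξ t) ≤ V (ξ 0) * exp (∫ s in (0:ℝ)..t, α s) :=
    le_mul_exp_integral_of_nonneg ht (fun s hs => (hVξ s hs.1).continuousAt.continuousWithinAt)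
      (fun s hs => hVξ s hs.1.le)
      (fun s _ => (mul_nonneg ha₁.le (rpow_nonneg (norm_nonneg _) r)).trans (hsand _).1)
      ((intervalIntegrable_iff_integrableOn_Icc_of_le ht).mp (hα t))
      (fun s hs hpos => hLyap s hs.1.le _ fun h₀ => by simp [h₀, hV₀] at hpos)
  exact le_rpow_mul_mul_exp_of_mul_rpow_le (norm_nonneg _) (norm_nonneg _) ha₁ ha₂.le hr₀
    ((hsand _).1.trans (hgrowth.trans
      (mul_le_mul_of_nonneg_right (hsand _).2 (exp_pos _).le)))
end

section
/- Under the sandwich bounds a₁‖ξ‖^r ≤ V(ξ) ≤ a₂‖ξ‖^r (a₁, a₂ > 0, r > 1) and the Lyapunov inequality DV(ξ)F(t,ξ) ≤ α(t)V(ξ) + M₁V(ξ)^q for all t ≥ 0, ξ ≠ 0, with M₁ > 0, q < 1, and ∫_{t₁}^{t₂} α ≤ M₂ for all 0 ≤ t₁ ≤ t₂, every solution satisfies ‖ξ(t)‖ ≤ M̄ (1 + c̄ t)^{1/(r(1−q))} for all t ≥ 0, where M̄ = (e^{M₂}(1 + a₂‖ξ(0)‖^r)/a₁)^{1/r} and c̄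 = M₁(1−q). -/
/-!
For `θ = V(ξ)^(1-q)` the Lyapunov inequality becomes linear (Bernoulli substitution):
`θ' ≤ (1-q) α θ + (1-q) M₁` wherever `ξ ≠ 0`. Starting from the last zero of `V ∘ ξ` before `t`,
the integrating factor `exp (-∫ α)` gives `θ t ≤ exp ((1-q) M₂) (θ 0 + (1-q) M₁ t)`. As `α` is
only integrable, the comparison is first proved for a continuous `L¹`-approximation `γ` of `α`,
with the error `|α - γ| θ` moved into the forcing term, and then passed to the limit.
The sandwich bounds turn the resulting bound on `V (ξ t)` into one on `‖ξ t‖`.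
-/

open MeasureTheory Set Filter Topology

theorem IntervalIntegrable.exists_continuous_integral_norm_sub_le {E : Type*}
    [NormedAddCommGroup E] [NormedSpace ℝ E] {β : ℝ → E} {s T δ : ℝ} (hsT : s ≤ T)
    (hβ : IntervalIntegrable β volume s T) (hδ : 0 < δ) :
    ∃ γ : ℝ → E, Continuous γ ∧ ∫ u in s..T, ‖β u - γ u‖ ≤ δ := by
  have hβi := hβ.1.integrable_indicator measurableSet_Ioc
  obtain ⟨γ, -, hγδ, hγ, hγi⟩ := hβi.exists_hasCompactSupport_integral_sub_le hδ
  refine ⟨γ, hγ, ?_⟩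
  calc ∫ u in s..T, ‖β u - γ u‖
      = ∫ u in Ioc s T, ‖(Ioc s T).indicator β u - γ u‖ := by
        rw [intervalIntegral.integral_of_le hsT]
        exact setIntegral_congr_fun measurableSet_Ioc fun u hu => by rw [indicator_of_mem hu]
    _ ≤ ∫ u, ‖(Ioc s T).indicator β u - γ u‖ :=
        setIntegral_le_integral (hβi.sub hγi).norm (ae_of_all _ fun _ => norm_nonneg _)
    _ ≤ δ := hγδ

theorem intervalIntegral_le_add_integral_norm_sub {β γ : ℝ → ℝ} {s u T : ℝ}
    (hβ : IntervalIntegrable β volume s T) (hγ : IntervalIntegrable γ volume s T)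
    (hu : u ∈ Icc s T) :
    ∫ v in u..T, γ v ≤ (∫ v in u..T, β v) + ∫ v in s..T, ‖β v - γ v‖ := by
  have hsub : uIcc u T ⊆ uIcc s T :=
    uIcc_subset_uIcc (by simpa [uIcc_of_le (hu.1.trans hu.2)] using hu) right_mem_uIcc
  have hsplit := intervalIntegral.integral_sub (hβ.mono_set hsub) (hγ.mono_set hsub)
  have hnorm := intervalIntegral.norm_integral_le_integral_norm (f := fun v => β v - γ v)
    (μ := volume) hu.2
  have hmono : ∫ v in u..T, ‖β v - γ v‖ ≤ ∫ v in s..T, ‖β v - γ v‖ :=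
    intervalIntegral.integral_mono_interval hu.1 hu.2 le_rfl
      (ae_of_all _ fun _ => norm_nonneg _) (hβ.sub hγ).norm
  have := neg_abs_le (∫ v in u..T, β v - γ v)
  rw [← Real.norm_eq_abs] at this
  linarith

theorem le_exp_integral_mul_add_integral_of_deriv_le {θ θ' γ f : ℝ → ℝ} {s T : ℝ}
    (hsT : s ≤ T) (hθ : ContinuousOn θ (Icc s T))
    (hθ' : ∀ u ∈ Ioo s T, HasDerivAt θ (θ' u) u) (hγ : Continuous γ)
    (hf : IntervalIntegrable f volume s T) (hle : ∀ u ∈ Ioo s T, θ' u ≤ γ u * θ u + f u) :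
    θ T ≤ Real.exp (∫ v in s..T, γ v) * θ s +
      ∫ u in s..T, Real.exp (∫ v in u..T, γ v) * f u := by
  set Γ : ℝ → ℝ := fun u => ∫ v in s..u, γ v
  have hΓ : ∀ u, HasDerivAt Γ (γ u) u := fun u => (hγ.integral_hasStrictDerivAt s u).hasDerivAt
  have hΓc : Continuous Γ := continuous_iff_continuousAt.2 fun u => (hΓ u).continuousAt
  have hgrowth : θ T * Real.exp (-Γ T) - θ s * Real.exp (-Γ s) ≤
      ∫ u in s..T, f u * Real.exp (-Γ u) := by
    refine intervalIntegral.sub_le_integral_of_hasDeriv_right_of_le hsT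
      (hθ.mul (hΓc.neg.rexp.continuousOn)) (fun u hu => ((hθ' u hu).mul
        (hΓ u).neg.exp).hasDerivWithinAt) ?_ fun u hu => ?_
    · exact (intervalIntegrable_iff_integrableOn_Icc_of_le hsT).1
        (hf.mul_continuousOn hΓc.neg.rexp.continuousOn)
    · have hE := Real.exp_pos (-Γ u)
      simp only [Pi.neg_apply]
      nlinarith [mul_le_mul_of_nonneg_right (hle u hu) hE.le]
  have hΓs : Γ s = 0 := intervalIntegral.integral_same
  have hshift : ∀ u, Real.exp (∫ v in u..T, γ v) = Real.exp (Γ T) * Real.exp (-Γ u) := by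
    intro u
    rw [← Real.exp_add, ← sub_eq_add_neg, intervalIntegral.integral_interval_sub_left
      (hγ.intervalIntegrable _ _) (hγ.intervalIntegrable _ _)]
  simp_rw [hshift, mul_assoc, intervalIntegral.integral_const_mul]
  have hET : Real.exp (Γ T) * Real.exp (-Γ T) = 1 := by rw [← Real.exp_add]; simp
  rw [hΓs, neg_zero, Real.exp_zero, mul_one] at hgrowth
  calc θ T = Real.exp (Γ T) * (θ T * Real.exp (-Γ T)) := by
        rw [mul_left_comm, hET, mul_one]
    _ ≤ Real.exp (Γ T) * (θ s + ∫ u in s..T, f u * Real.exp (-Γ u)) := by gcongr; linarith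
    _ = _ := by rw [hΓs, neg_zero, Real.exp_zero]; simp_rw [mul_comm (f _)]; ring

theorem le_exp_mul_of_forall_pos_le {x A C K : ℝ}
    (h : ∀ δ > 0, x ≤ Real.exp (K + δ) * (A + C * δ)) : x ≤ Real.exp K * A := by
  have hlim : Tendsto (fun δ => Real.exp (K + δ) * (A + C * δ)) (𝓝[>] 0)
      (𝓝 (Real.exp K * A)) := by
    have : Continuous fun δ => Real.exp (K + δ) * (A + C * δ) := by fun_prop
    simpa using (this.tendsto 0).mono_left nhdsWithin_le_nhds
  exact ge_of_tendsto hlim (eventually_nhdsWithin_of_forall h)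

theorem le_exp_mul_add_mul_of_deriv_le {θ θ' β : ℝ → ℝ} {s T K c : ℝ} (hsT : s ≤ T)
    (hθ : ContinuousOn θ (Icc s T)) (hθ0 : ∀ u ∈ Icc s T, 0 ≤ θ u)
    (hθ' : ∀ u ∈ Ioo s T, HasDerivAt θ (θ' u) u) (hβ : IntervalIntegrable β volume s T)
    (hc : 0 ≤ c) (hle : ∀ u ∈ Ioo s T, θ' u ≤ β u * θ u + c)
    (hK : ∀ u ∈ Icc s T, ∫ v in u..T, β v ≤ K) :
    θ T ≤ Real.exp K * (θ s + c * (T - s)) := by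
  have hs : s ∈ Icc s T := left_mem_Icc.2 hsT
  obtain ⟨C, hC⟩ := isCompact_Icc.bddAbove_image hθ
  have hθC : ∀ u ∈ Icc s T, θ u ≤ C := fun u hu => hC (mem_image_of_mem θ hu)
  have hC0 : 0 ≤ C := (hθ0 s hs).trans (hθC s hs)
  refine le_exp_mul_of_forall_pos_le (C := C) fun δ hδ => ?_
  obtain ⟨γ, hγ, hγδ⟩ := hβ.exists_continuous_integral_norm_sub_le hsT hδ
  have hβγ : IntervalIntegrable (fun u => ‖β u - γ u‖) volume s T :=
    (hβ.sub (hγ.intervalIntegrable _ _)).norm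
  have hf : IntervalIntegrable (fun u => c + C * ‖β u - γ u‖) volume s T :=
    intervalIntegrable_const.add (hβγ.const_mul C)
  have hγK : ∀ u ∈ Icc s T, ∫ v in u..T, γ v ≤ K + δ := fun u hu => by
    linarith [intervalIntegral_le_add_integral_norm_sub hβ (hγ.intervalIntegrable s T) hu, hK u hu]
  have hΓ : Continuous fun u => ∫ v in u..T, γ v := by
    rw [funext fun u => intervalIntegral.integral_symm T u]
    exact (intervalIntegral.continuous_primitive (fun _ _ => hγ.intervalIntegrable _ _) T).neg
  have hcomp := le_exp_integral_mul_add_integral_of_deriv_le hsT hθ hθ' hγ hf fun u hu => by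
    have hθu := hθ0 u (Ioo_subset_Icc_self hu)
    have : (β u - γ u) * θ u ≤ ‖β u - γ u‖ * C :=
      mul_le_mul (Real.norm_eq_abs _ ▸ le_abs_self _) (hθC u (Ioo_subset_Icc_self hu)) hθu
        (norm_nonneg _)
    linarith [hle u hu]
  calc θ T ≤ Real.exp (∫ v in s..T, γ v) * θ s +
        ∫ u in s..T, Real.exp (∫ v in u..T, γ v) * (c + C * ‖β u - γ u‖) := hcomp
    _ ≤ Real.exp (K + δ) * θ s + ∫ u in s..T, Real.exp (K + δ) * (c + C * ‖β u - γ u‖) := by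
      gcongr
      · exact hθ0 s hs
      · exact hγK s hs
      refine intervalIntegral.integral_mono_on hsT
        (hf.continuousOn_mul hΓ.rexp.continuousOn) (hf.const_mul _) fun u hu => ?_
      gcongr
      exact hγK u hu
    _ = Real.exp (K + δ) * (θ s + c * (T - s) + C * ∫ u in s..T, ‖β u - γ u‖) := by
      rw [intervalIntegral.integral_const_mul, intervalIntegral.integral_add
        intervalIntegrable_const (hβγ.const_mul C), intervalIntegral.integral_const_mul]
      simp; ring
    _ ≤ Real.exp (K + δ) * (θ s + c * (T - s) + C * δ) := by gcongr

theorem exists_forall_Ioc_ne_of_continuousOn {β : Type*} [TopologicalSpace β] [T1Space β]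
    {f : ℝ → β} {a b : ℝ} {y : β} (hab : a ≤ b) (hf : ContinuousOn f (Icc a b)) :
    ∃ σ ∈ Icc a b, (σ = a ∨ f σ = y) ∧ ∀ u ∈ Ioc σ b, f u ≠ y := by
  have hZ : IsCompact (insert a (Icc a b ∩ f ⁻¹' {y})) :=
    (isCompact_Icc.of_isClosed_subset
      (hf.preimage_isClosed_of_isClosed isClosed_Icc isClosed_singleton)
      inter_subset_left).insert a
  obtain ⟨σ, hσZ, hσmax⟩ := hZ.exists_isGreatest (insert_nonempty _ _)
  have haσ : a ≤ σ := hσmax (mem_insert a _)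
  refine ⟨σ, ?_, ?_, fun u hu hfu => ?_⟩
  · rcases hσZ with rfl | hσ
    · exact left_mem_Icc.2 hab
    · exact hσ.1
  · rcases hσZ with rfl | hσ
    · exact Or.inl rfl
    · exact Or.inr hσ.2
  · have := hσmax (mem_insert_of_mem a ⟨⟨haσ.trans hu.1.le, hu.2⟩, hfu⟩)
    exact absurd hu.1 this.not_gt

theorem mul_rpow_one_sub_sub_one_le {w w' a M q : ℝ} (hw : 0 < w) (hq : q ≤ 1)
    (h : w' ≤ a * w + M * w ^ q) :
    w' * (1 - q) * w ^ (1 - q - 1) ≤ (1 - q) * a * w ^ (1 - q) + (1 - q) * M := by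
  have h₁ : w ^ (1 - q - 1) * w = w ^ (1 - q) := by
    rw [← Real.rpow_add_one hw.ne']; ring_nf
  have h₂ : w ^ (1 - q - 1) * w ^ q = 1 := by
    rw [← Real.rpow_add hw]; norm_num
  calc w' * (1 - q) * w ^ (1 - q - 1)
      ≤ (a * w + M * w ^ q) * (1 - q) * w ^ (1 - q - 1) := by gcongr
    _ = (1 - q) * a * (w ^ (1 - q - 1) * w) + (1 - q) * M * (w ^ (1 - q - 1) * w ^ q) := by ring
    _ = _ := by rw [h₁, h₂, mul_one]

theorem rpow_one_sub_le_of_deriv_le {W W' α : ℝ → ℝ} {a b q M K : ℝ} (hab : a ≤ b) (hq : q < 1)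
    (hM : 0 ≤ M) (hW : ContinuousOn W (Icc a b)) (hW0 : ∀ u ∈ Icc a b, 0 ≤ W u)
    (hW' : ∀ u ∈ Ioo a b, W u ≠ 0 → HasDerivAt W (W' u) u ∧ W' u ≤ α u * W u + M * W u ^ q)
    (hα : IntervalIntegrable α volume a b) (hK : ∀ u ∈ Icc a b, ∫ v in u..b, α v ≤ K) :
    W b ^ (1 - q) ≤ Real.exp ((1 - q) * K) * (W a ^ (1 - q) + (1 - q) * M * (b - a)) := by
  have hp : 0 < 1 - q := sub_pos.2 hq
  -- `W ^ (1 - q)` need not be differentiable where `W = 0`: start after the last zero `σ`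
  obtain ⟨σ, hσ, hσW, hWne⟩ := exists_forall_Ioc_ne_of_continuousOn (y := 0) hab hW
  have hσb : Icc σ b ⊆ Icc a b := Icc_subset_Icc_left hσ.1
  have hWσ : W σ ^ (1 - q) ≤ W a ^ (1 - q) := by
    rcases hσW with rfl | h
    · exact le_rfl
    · rw [h, Real.zero_rpow hp.ne']
      exact Real.rpow_nonneg (hW0 a (left_mem_Icc.2 hab)) _
  have hWpos : ∀ u ∈ Ioo σ b, u ∈ Ioo a b ∧ 0 < W u := fun u hu =>
    ⟨⟨hσ.1.trans_lt hu.1, hu.2⟩, (hW0 u (hσb (Ioo_subset_Icc_self hu))).lt_of_ne'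
      (hWne u (Ioo_subset_Ioc_self hu))⟩
  have hderiv : ∀ u ∈ Ioo σ b,
      HasDerivAt (fun v => W v ^ (1 - q)) (W' u * (1 - q) * W u ^ (1 - q - 1)) u := fun u hu =>
    ((hW' u (hWpos u hu).1 (hWpos u hu).2.ne').1.rpow_const (Or.inl (hWpos u hu).2.ne'))
  have hlinear : ∀ u ∈ Ioo σ b, W' u * (1 - q) * W u ^ (1 - q - 1) ≤
      (1 - q) * α u * W u ^ (1 - q) + (1 - q) * M := fun u hu => by
    have := mul_rpow_one_sub_sub_one_le (hWpos u hu).2 hq.le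
      (hW' u (hWpos u hu).1 (hWpos u hu).2.ne').2
    linarith
  have hαK : ∀ u ∈ Icc σ b, ∫ v in u..b, (1 - q) * α v ≤ (1 - q) * K := fun u hu => by
    rw [intervalIntegral.integral_const_mul]
    exact mul_le_mul_of_nonneg_left (hK u (hσb hu)) hp.le
  have hασ : IntervalIntegrable α volume σ b :=
    hα.mono_set (uIcc_subset_uIcc (by simpa [uIcc_of_le hab] using hσ) right_mem_uIcc)
  calc W b ^ (1 - q) ≤ Real.exp ((1 - q) * K) * (W σ ^ (1 - q) + (1 - q) * M * (b - σ)) :=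
        le_exp_mul_add_mul_of_deriv_le hσ.2 ((hW.mono hσb).rpow_const fun _ _ => Or.inr hp.le)
          (fun u hu => Real.rpow_nonneg (hW0 u (hσb hu)) _) hderiv (hασ.const_mul _)
          (by positivity) hlinear hαK
    _ ≤ _ := by
      gcongr
      exact hσ.1

theorem le_rpow_mul_rpow_of_mul_rpow_le {x w E P a c r p : ℝ} (hx : 0 ≤ x) (ha : 0 < a)
    (hr : 0 < r) (hp : 0 < p) (hP : 0 ≤ P) (hc : 0 ≤ c) (hxw : a * x ^ r ≤ w)
    (hwp : w ^ p ≤ Real.exp (p * E) * (P ^ p * c)) :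
    x ≤ (Real.exp E * P / a) ^ (1 / r) * c ^ (1 / (r * p)) := by
  have hw : 0 ≤ w := (by positivity : 0 ≤ a * x ^ r).trans hxw
  have hw' : w ≤ Real.exp E * P * c ^ p⁻¹ := by
    rw [← Real.rpow_le_rpow_iff hw (by positivity) hp, Real.mul_rpow (by positivity)
      (by positivity), Real.mul_rpow (by positivity) hP, ← Real.rpow_mul hc,
      inv_mul_cancel₀ hp.ne', Real.rpow_one, ← Real.exp_mul, mul_comm E]
    linarith [hwp, show Real.exp (p * E) * (P ^ p * c) = Real.exp (p * E) * P ^ p * c by ring]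
  have hxr : x ^ r ≤ Real.exp E * P / a * c ^ p⁻¹ := by
    rw [div_mul_eq_mul_div, le_div_iff₀' ha]
    exact hxw.trans hw'
  calc x ≤ (Real.exp E * P / a * c ^ p⁻¹) ^ r⁻¹ :=
        (Real.le_rpow_inv_iff_of_pos hx (by positivity) hr).2 hxr
    _ = _ := by
      rw [Real.mul_rpow (by positivity) (by positivity), ← Real.rpow_mul hc, one_div, one_div,
        mul_inv, mul_comm p⁻¹]

theorem lyapunov_growth_M1_pos_general {d : ℕ}
    (F : ℝ → EuclideanSpace ℝ (Fin d) → EuclideanSpace ℝ (Fin d))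
    (ξ : ℝ → EuclideanSpace ℝ (Fin d))
    (hξ : ∀ t, 0 ≤ t → HasDerivAt ξ (F t (ξ t)) t)
    (V : EuclideanSpace ℝ (Fin d) → ℝ) (hV : ContDiff ℝ 1 V)
    (a₁ a₂ r q M₁ M₂ : ℝ) (ha₁ : 0 < a₁) (ha₂ : 0 < a₂) (hr : 1 < r)
    (hq : q < 1) (hM₁ : 0 < M₁)
    (hsand : ∀ x, a₁ * ‖x‖ ^ r ≤ V x ∧ V x ≤ a₂ * ‖x‖ ^ r)
    (α : ℝ → ℝ) (hα : ∀ t, IntervalIntegrable α volume 0 t)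
    (hαbound : ∀ t₁ t₂, 0 ≤ t₁ → t₁ ≤ t₂ → (∫ s in t₁..t₂, α s) ≤ M₂)
    (hLyap : ∀ t, 0 ≤ t → ∀ x, x ≠ 0 →
      fderiv ℝ V x (F t x) ≤ α t * V x + M₁ * (V x) ^ q) :
    ∀ t, 0 ≤ t →
      ‖ξ t‖ ≤ (Real.exp M₂ * (1 + a₂ * ‖ξ 0‖ ^ r) / a₁) ^ (1 / r) *
        (1 + M₁ * (1 - q) * t) ^ (1 / (r * (1 - q))) := by
  intro t ht
  have hp : 0 < 1 - q := sub_pos.2 hq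
  have hVd : Differentiable ℝ V := hV.differentiable one_ne_zero
  have hV0 : V 0 = 0 := by
    have := hsand 0
    rw [norm_zero, Real.zero_rpow (by linarith), mul_zero, mul_zero] at this
    exact le_antisymm this.2 this.1
  have hVnn : ∀ x, 0 ≤ V x := fun x => (by positivity : 0 ≤ a₁ * ‖x‖ ^ r).trans (hsand x).1
  have hW := rpow_one_sub_le_of_deriv_le (W := fun u => V (ξ u))
    (W' := fun u => fderiv ℝ V (ξ u) (F u (ξ u))) ht hq hM₁.le
    (fun u hu => (hVd.continuous.continuousAt.comp (hξ u hu.1).continuousAt).continuousWithinAt)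
    (fun u _ => hVnn _)
    (fun u hu hWu => ⟨(hVd _).hasFDerivAt.comp_hasDerivAt u (hξ u hu.1.le),
      hLyap u hu.1.le _ fun h => hWu (by simp [h, hV0])⟩)
    (hα t) (fun u hu => hαbound u t hu.1 hu.2)
  refine le_rpow_mul_rpow_of_mul_rpow_le (norm_nonneg _) ha₁ (by linarith) hp (by positivity)
    (by positivity) (hsand (ξ t)).1 (hW.trans ?_)
  have hP : V (ξ 0) ^ (1 - q) ≤ (1 + a₂ * ‖ξ 0‖ ^ r) ^ (1 - q) :=
    Real.rpow_le_rpow (hVnn _) (by linarith [(hsand (ξ 0)).2]) hp.le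
  have hP1 : 1 ≤ (1 + a₂ * ‖ξ 0‖ ^ r) ^ (1 - q) :=
    Real.one_le_rpow (le_add_of_nonneg_right (by positivity)) hp.le
  gcongr
  nlinarith [mul_nonneg (mul_nonneg hM₁.le hp.le) ht]

theorem lyapunov_growth_M1_pos {d : ℕ}
    (F : ℝ → EuclideanSpace ℝ (Fin d) → EuclideanSpace ℝ (Fin d))
    (ξ : ℝ → EuclideanSpace ℝ (Fin d))
    (hξ : ∀ t, 0 ≤ t → HasDerivAt ξ (F t (ξ t)) t)
    (V : EuclideanSpace ℝ (Fin d) → ℝ) (hV : ContDiff ℝ 1 V)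
    (a₁ a₂ r q M₁ M₂ : ℝ) (ha₁ : 0 < a₁) (ha₂ : 0 < a₂) (hr : 1 < r)
    (hq : q < 1) (hM₁ : 0 < M₁) (hM₂ : 0 < M₂)
    (hsand : ∀ x, a₁ * ‖x‖ ^ r ≤ V x ∧ V x ≤ a₂ * ‖x‖ ^ r)
    (α : ℝ → ℝ) (hα : ∀ t, IntervalIntegrable α volume 0 t)
    (hαbound : ∀ t₁ t₂, 0 ≤ t₁ → t₁ ≤ t₂ → (∫ s in t₁..t₂, α s) ≤ M₂)
    (hLyap : ∀ t, 0 ≤ t → ∀ x, x ≠ 0 →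
      fderiv ℝ V x (F t x) ≤ α t * V x + M₁ * (V x) ^ q) :
    ∀ t, 0 ≤ t →
      ‖ξ t‖ ≤ (Real.exp M₂ * (1 + a₂ * ‖ξ 0‖ ^ r) / a₁) ^ (1 / r) *
        (1 + M₁ * (1 - q) * t) ^ (1 / (r * (1 - q))) :=
  lyapunov_growth_M1_pos_general F ξ hξ V hV a₁ a₂ r q M₁ M₂ ha₁ ha₂ hr hq hM₁ hsand α hα hαbound
    hLyap
end
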